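/- arXiv:2106.14702 — 2 statements merged into one kernel-verified Lean document; each statement's English description precedes it below -/
import Mathlib

section
/- Let G_max maximize U^D(G) over the box [G̲₁, Ḡ₁]×…×[G̲ₘ, Ḡₘ]. Then π_{G_max} is a min-max strategy: for every detection function π : V → [0,1], min_α Σᵢ pᵢ Uᵢᴰ(α, π_{G_max}) ≥ min_α Σᵢ pᵢ Uᵢᴰ(α, π), and moreover min_α Σᵢ pᵢ Uᵢᴰ(α, π_{G_max}) = U^D(G_max). -/
/-!
Against `π_G` no target gives a type-`i` attacker more than `G i`, so every attacker strategy
leaves the defender at least `U^D(G)`. Conversely, against an arbitrary detection function `π`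
let each type play a pure best response, with value `B i`. Then `B` lies in the box and
`π_B ≤ π`, so against `π` the defender earns at most `U^D(B) ≤ U^D(G_max)`. For
`π = π_{G_max}` the two bounds meet.
-/

open Finset

/-- The optimal probability of detection associated with utility profile `G`. -/
noncomputable def piG {V : Type*} [Fintype V] {m : ℕ} (Uu Ud : Fin m → V → ℝ)
    (G : Fin m → ℝ) (v : V) : ℝ :=
  max 0 (⨆ i, (Uu i v - G i) / (Uu i v + Ud i v))

/-- The minimum possible attacker gain `G̲ᵢ = max_v (−Uᵢᵈ(v))`. -/
noncomputable def Glo {V : Type*} [Fintype V] {m : ℕ} (Ud : Fin m → V → ℝ)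
    (i : Fin m) : ℝ :=
  ⨆ v, -(Ud i v)

/-- The maximum possible attacker gain `Ḡᵢ = max_v Uᵢᵘ(v)`. -/
noncomputable def Ghi {V : Type*} [Fintype V] {m : ℕ} (Uu : Fin m → V → ℝ)
    (i : Fin m) : ℝ :=
  ⨆ v, Uu i v

/-- Attacker type `i`'s expected utility against detection function `π`. -/
noncomputable def UApi {V : Type*} [Fintype V] {m : ℕ} (Uu Ud : Fin m → V → ℝ)
    (α : Fin m → V → ℝ) (π : V → ℝ) (i : Fin m) : ℝ :=
  ∑ v, α i v * (Uu i v - π v * (Uu i v + Ud i v))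

/-- Defender's expected utility facing a type `i` attacker, with detection function `π`. -/
noncomputable def UDpi {V : Type*} [Fintype V] {m : ℕ} (Uu Ud : Fin m → V → ℝ)
    (cfa P0 : V → ℝ) (pa : ℝ) (α : Fin m → V → ℝ) (π : V → ℝ) (i : Fin m) : ℝ :=
  -pa * UApi Uu Ud α π i - (1 - pa) * ∑ v, cfa v * P0 v * π v

/-- `α` is a valid attacker mixed strategy: a distribution on `V` for each type. -/
def IsAttStrat {V : Type*} [Fintype V] {m : ℕ} (α : Fin m → V → ℝ) : Prop :=
  ∀ i, (∀ v, 0 ≤ α i v) ∧ ∑ v, α i v = 1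

/-- The minimum gain function `U^D(G)`. -/
noncomputable def UDfun {V : Type*} [Fintype V] {m : ℕ} (Uu Ud : Fin m → V → ℝ)
    (cfa P0 : V → ℝ) (pa : ℝ) (p : Fin m → ℝ) (G : Fin m → ℝ) : ℝ :=
  -pa * ∑ i, p i * G i - (1 - pa) * ∑ v, cfa v * P0 v * piG Uu Ud G v

section

variable {V : Type*} [Fintype V] {m : ℕ}

def IsBestResponse (Uu Ud : Fin m → V → ℝ) (α : Fin m → V → ℝ) (π : V → ℝ) : Prop :=
  ∀ i v, Uu i v - π v * (Uu i v + Ud i v) ≤ UApi Uu Ud α π i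

lemma exists_pure_best_response [Nonempty V] (Uu Ud : Fin m → V → ℝ) (π : V → ℝ) :
    ∃ α, IsAttStrat α ∧ IsBestResponse Uu Ud α π := by
  classical
  choose v₀ hv₀ using fun i => Finite.exists_max fun v => Uu i v - π v * (Uu i v + Ud i v)
  have hUApi : ∀ i, UApi Uu Ud (fun i => Pi.single (v₀ i) 1) π i
      = Uu i (v₀ i) - π (v₀ i) * (Uu i (v₀ i) + Ud i (v₀ i)) := by
    intro i
    simp [UApi, Pi.single_apply]
  refine ⟨fun i => Pi.single (v₀ i) 1, fun i => ⟨fun v => ?_, Fintype.sum_pi_single' _ _⟩,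
    fun i v => (hv₀ i v).trans_eq (hUApi i).symm⟩
  by_cases h : v = v₀ i <;> simp [h]

variable {Uu Ud : Fin m → V → ℝ}

lemma sum_mul_UDpi (cfa P0 : V → ℝ) (pa : ℝ) {p : Fin m → ℝ} (hp1 : ∑ i, p i = 1)
    (α : Fin m → V → ℝ) (π : V → ℝ) :
    ∑ i, p i * UDpi Uu Ud cfa P0 pa α π i
      = -pa * ∑ i, p i * UApi Uu Ud α π i - (1 - pa) * ∑ v, cfa v * P0 v * π v := by
  have hcost : ∑ i, p i * ((1 - pa) * ∑ v, cfa v * P0 v * π v)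
      = (1 - pa) * ∑ v, cfa v * P0 v * π v := by
    rw [← sum_mul, hp1, one_mul]
  simp only [UDpi, mul_sub, sum_sub_distrib, hcost, mul_sum (s := univ) (a := -pa)]
  congr 1
  exact sum_congr rfl fun i _ => by ring

lemma UApi_le_of_forall_le {α : Fin m → V → ℝ} (hα : IsAttStrat α) {π : V → ℝ} {i : Fin m}
    {b : ℝ} (hb : ∀ v, Uu i v - π v * (Uu i v + Ud i v) ≤ b) :
    UApi Uu Ud α π i ≤ b :=
  calc UApi Uu Ud α π i ≤ ∑ v, α i v * b :=
        sum_le_sum fun v _ => mul_le_mul_of_nonneg_left (hb v) ((hα i).1 v)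
    _ = b := by rw [← sum_mul, (hα i).2, one_mul]

lemma sub_piG_mul_le {i : Fin m} {v : V} (hs : 0 < Uu i v + Ud i v) (G : Fin m → ℝ) :
    Uu i v - piG Uu Ud G v * (Uu i v + Ud i v) ≤ G i := by
  have h : (Uu i v - G i) / (Uu i v + Ud i v) ≤ piG Uu Ud G v :=
    (le_ciSup (f := fun j => (Uu j v - G j) / (Uu j v + Ud j v))
      (Set.finite_range _).bddAbove i).trans (le_max_right _ _)
  rw [div_le_iff₀ hs] at h
  linarith

lemma piG_le_of_forall_le (hs : ∀ i v, 0 < Uu i v + Ud i v) {π : V → ℝ} (hπ : ∀ v, 0 ≤ π v)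
    {B : Fin m → ℝ} (hB : ∀ i v, Uu i v - π v * (Uu i v + Ud i v) ≤ B i) (v : V) :
    piG Uu Ud B v ≤ π v := by
  refine max_le (hπ v) (Real.iSup_le (fun i => ?_) (hπ v))
  rw [div_le_iff₀ (hs i v)]
  linarith [hB i v]

lemma piG_mem_Icc (hs : ∀ i v, 0 < Uu i v + Ud i v) {G : Fin m → ℝ}
    (hG : ∀ i, Glo Ud i ≤ G i) (v : V) : piG Uu Ud G v ∈ Set.Icc 0 1 := by
  refine ⟨le_max_left _ _, max_le zero_le_one (Real.iSup_le (fun i => ?_) zero_le_one)⟩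
  have hUd : -Ud i v ≤ G i :=
    (le_ciSup (Set.finite_range fun w => -Ud i w).bddAbove v).trans (hG i)
  rw [div_le_one (hs i v)]
  linarith

lemma IsBestResponse.UApi_mem_Icc [Nonempty V] (hs : ∀ i v, 0 < Uu i v + Ud i v)
    {π : V → ℝ} (hπ : ∀ v, π v ∈ Set.Icc 0 1) {α : Fin m → V → ℝ} (hα : IsAttStrat α)
    (hbr : IsBestResponse Uu Ud α π) (i : Fin m) :
    UApi Uu Ud α π i ∈ Set.Icc (Glo Ud i) (Ghi Uu i) := by
  have hπs : ∀ v, 0 ≤ π v * (Uu i v + Ud i v) ∧ π v * (Uu i v + Ud i v) ≤ Uu i v + Ud i v :=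
    fun v => ⟨mul_nonneg (hπ v).1 (hs i v).le, mul_le_of_le_one_left (hs i v).le (hπ v).2⟩
  refine ⟨ciSup_le fun v => ?_, UApi_le_of_forall_le hα fun v => ?_⟩
  · linarith [hbr i v, hπs v]
  · have hUu : Uu i v ≤ Ghi Uu i := le_ciSup (Set.finite_range (Uu i)).bddAbove v
    linarith [hπs v]

variable {cfa P0 : V → ℝ} {pa : ℝ} {p : Fin m → ℝ}

lemma UDfun_le_sum_mul_UDpi_piG (hs : ∀ i v, 0 < Uu i v + Ud i v) (hpa0 : 0 ≤ pa)
    (hp0 : ∀ i, 0 ≤ p i) (hp1 : ∑ i, p i = 1) (G : Fin m → ℝ) {α : Fin m → V → ℝ}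
    (hα : IsAttStrat α) :
    UDfun Uu Ud cfa P0 pa p G ≤ ∑ i, p i * UDpi Uu Ud cfa P0 pa α (piG Uu Ud G) i := by
  have hA : ∑ i, p i * UApi Uu Ud α (piG Uu Ud G) i ≤ ∑ i, p i * G i :=
    sum_le_sum fun i _ => mul_le_mul_of_nonneg_left
      (UApi_le_of_forall_le hα fun v => sub_piG_mul_le (hs i v) G) (hp0 i)
  rw [sum_mul_UDpi cfa P0 pa hp1, UDfun]
  linarith [mul_le_mul_of_nonneg_left hA hpa0]

lemma IsBestResponse.sum_mul_UDpi_le_UDfun (hs : ∀ i v, 0 < Uu i v + Ud i v)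
    (hcfa : ∀ v, 0 ≤ cfa v) (hP0 : ∀ v, 0 ≤ P0 v) (hpa1 : pa ≤ 1) (hp1 : ∑ i, p i = 1)
    {π : V → ℝ} (hπ : ∀ v, 0 ≤ π v) {α : Fin m → V → ℝ} (hbr : IsBestResponse Uu Ud α π) :
    ∑ i, p i * UDpi Uu Ud cfa P0 pa α π i
      ≤ UDfun Uu Ud cfa P0 pa p fun i => UApi Uu Ud α π i := by
  have hC : ∑ v, cfa v * P0 v * piG Uu Ud (fun i => UApi Uu Ud α π i) v
      ≤ ∑ v, cfa v * P0 v * π v :=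
    sum_le_sum fun v _ => mul_le_mul_of_nonneg_left (piG_le_of_forall_le hs hπ hbr v)
      (mul_nonneg (hcfa v) (hP0 v))
  rw [sum_mul_UDpi cfa P0 pa hp1, UDfun]
  linarith [mul_le_mul_of_nonneg_left hC (sub_nonneg.mpr hpa1)]

end

theorem piG_max_is_minmax_general {V : Type*} [Fintype V] [Nonempty V] {m : ℕ}
    (Uu Ud : Fin m → V → ℝ) (hs : ∀ i v, 0 < Uu i v + Ud i v)
    (cfa : V → ℝ) (hcfa : ∀ v, 0 ≤ cfa v)
    (P0 : V → ℝ) (hP00 : ∀ v, 0 ≤ P0 v)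
    (pa : ℝ) (hpa0 : 0 < pa) (hpa1 : pa < 1)
    (p : Fin m → ℝ) (hp0 : ∀ i, 0 ≤ p i) (hp1 : ∑ i, p i = 1)
    (Gmax : Fin m → ℝ) (hGmax : ∀ i, Gmax i ∈ Set.Icc (Glo Ud i) (Ghi Uu i))
    (hmax : ∀ G : Fin m → ℝ, (∀ i, G i ∈ Set.Icc (Glo Ud i) (Ghi Uu i)) →
      UDfun Uu Ud cfa P0 pa p G ≤ UDfun Uu Ud cfa P0 pa p Gmax) :
    -- the min over `α` of the defender's utility against `π_{G_max}` equals `U^D(G_max)`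
    ((∀ α, IsAttStrat α →
        UDfun Uu Ud cfa P0 pa p Gmax
          ≤ ∑ i, p i * UDpi Uu Ud cfa P0 pa α (piG Uu Ud Gmax) i)
      ∧ ∃ α, IsAttStrat α ∧
          ∑ i, p i * UDpi Uu Ud cfa P0 pa α (piG Uu Ud Gmax) i
            = UDfun Uu Ud cfa P0 pa p Gmax)
    -- and it dominates the min over `α` attained by any detection function `π`
    ∧ ∀ π : V → ℝ, (∀ v, π v ∈ Set.Icc (0 : ℝ) 1) →
        ∃ α, IsAttStrat α ∧
          ∑ i, p i * UDpi Uu Ud cfa P0 pa α π i ≤ UDfun Uu Ud cfa P0 pa p Gmax := by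
  have lower : ∀ α, IsAttStrat α →
      UDfun Uu Ud cfa P0 pa p Gmax
        ≤ ∑ i, p i * UDpi Uu Ud cfa P0 pa α (piG Uu Ud Gmax) i :=
    fun α hα => UDfun_le_sum_mul_UDpi_piG hs hpa0.le hp0 hp1 Gmax hα
  have upper : ∀ π : V → ℝ, (∀ v, π v ∈ Set.Icc (0 : ℝ) 1) →
      ∃ α, IsAttStrat α ∧
        ∑ i, p i * UDpi Uu Ud cfa P0 pa α π i ≤ UDfun Uu Ud cfa P0 pa p Gmax := by
    intro π hπ
    obtain ⟨α, hα, hbr⟩ := exists_pure_best_response Uu Ud π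
    exact ⟨α, hα, (hbr.sum_mul_UDpi_le_UDfun hs hcfa hP00 hpa1.le hp1 fun v => (hπ v).1).trans
      (hmax _ (hbr.UApi_mem_Icc hs hπ hα))⟩
  obtain ⟨α₀, hα₀, hle⟩ := upper _ (piG_mem_Icc hs fun i => (hGmax i).1)
  exact ⟨⟨lower, α₀, hα₀, le_antisymm hle (lower α₀ hα₀)⟩, upper⟩

/-- if `G_max` maximizes `U^D` over the box, then `π_{G_max}` is a min-max
strategy of the defender, with min-max value `U^D(G_max)`. -/
theorem piG_max_is_minmax {V : Type*} [Fintype V] [Nonempty V] {m : ℕ}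
    (Uu Ud : Fin m → V → ℝ) (hs : ∀ i v, 0 < Uu i v + Ud i v)
    (cfa : V → ℝ) (hcfa : ∀ v, 0 ≤ cfa v)
    (P0 : V → ℝ) (hP00 : ∀ v, 0 ≤ P0 v) (hP01 : ∑ v, P0 v = 1)
    (pa : ℝ) (hpa0 : 0 < pa) (hpa1 : pa < 1)
    (p : Fin m → ℝ) (hp0 : ∀ i, 0 ≤ p i) (hp1 : ∑ i, p i = 1)
    (Gmax : Fin m → ℝ) (hGmax : ∀ i, Gmax i ∈ Set.Icc (Glo Ud i) (Ghi Uu i))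
    (hmax : ∀ G : Fin m → ℝ, (∀ i, G i ∈ Set.Icc (Glo Ud i) (Ghi Uu i)) →
      UDfun Uu Ud cfa P0 pa p G ≤ UDfun Uu Ud cfa P0 pa p Gmax) :
    -- the min over `α` of the defender's utility against `π_{G_max}` equals `U^D(G_max)`
    ((∀ α, IsAttStrat α →
        UDfun Uu Ud cfa P0 pa p Gmax
          ≤ ∑ i, p i * UDpi Uu Ud cfa P0 pa α (piG Uu Ud Gmax) i)
      ∧ ∃ α, IsAttStrat α ∧
          ∑ i, p i * UDpi Uu Ud cfa P0 pa α (piG Uu Ud Gmax) i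
            = UDfun Uu Ud cfa P0 pa p Gmax)
    -- and it dominates the min over `α` attained by any detection function `π`
    ∧ ∀ π : V → ℝ, (∀ v, π v ∈ Set.Icc (0 : ℝ) 1) →
        ∃ α, IsAttStrat α ∧
          ∑ i, p i * UDpi Uu Ud cfa P0 pa α π i ≤ UDfun Uu Ud cfa P0 pa p Gmax :=
  piG_max_is_minmax_general Uu Ud hs cfa hcfa P0 hP00 pa hpa0 hpa1 p hp0 hp1 Gmax hGmax hmax
end

section
/- If G_max maximizes U^D over the box, then the utility profile G_max is attained exactly by best-responding attackers: for every type i, max_v {Uᵢᵘ(v) − π_{G_max}(v)·(Uᵢᵘ(v)+Uᵢᵈ(v))} = (G_max)ᵢ. -/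
open Finset

/-- The best-response utility profile `G^π` induced by a detection function `π`. -/
noncomputable def Gpi {V : Type*} [Fintype V] {m : ℕ} (Uu Ud : Fin m → V → ℝ)
    (π : V → ℝ) (i : Fin m) : ℝ :=
  ⨆ v, (Uu i v - π v * (Uu i v + Ud i v))

/-!
Since `π_G(v)` dominates every ratio `(Uᵢᵘ(v) − Gᵢ)/(Uᵢᵘ(v) + Uᵢᵈ(v))`, the best-response payoff
`tᵢ = G^{π_G}ᵢ` never exceeds `Gᵢ`. If `tᵢ < (G_max)ᵢ`, lower `(G_max)ᵢ` to `tᵢ`: every ratio of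
type `i` stays below `π_{G_max}`, so the detection function does not move, while `tᵢ ≥ G̲ᵢ`
(because `π ≤ 1`) keeps the profile in the box. The attacker term of `U^D` then gains
`pₐ pᵢ ((G_max)ᵢ − tᵢ) > 0`, contradicting maximality.
-/

section

variable {V : Type*} [Fintype V] {m : ℕ} {Uu Ud : Fin m → V → ℝ}

theorem div_le_piG (G : Fin m → ℝ) (j : Fin m) (v : V) :
    (Uu j v - G j) / (Uu j v + Ud j v) ≤ piG Uu Ud G v :=
  (le_ciSup (f := fun k => (Uu k v - G k) / (Uu k v + Ud k v)) (Set.finite_range _).bddAbove j).trans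
    (le_max_right _ _)

theorem sub_mul_piG_le (hs : ∀ i v, 0 < Uu i v + Ud i v) (G : Fin m → ℝ) (j : Fin m) (v : V) :
    Uu j v - piG Uu Ud G v * (Uu j v + Ud j v) ≤ G j := by
  have h := div_le_piG (Uu := Uu) (Ud := Ud) G j v
  rw [div_le_iff₀ (hs j v)] at h
  linarith

theorem piG_le_one (hs : ∀ i v, 0 < Uu i v + Ud i v) {G : Fin m → ℝ}
    (hG : ∀ j, Glo Ud j ≤ G j) (v : V) : piG Uu Ud G v ≤ 1 := by
  refine max_le zero_le_one (Real.iSup_le (fun j => ?_) zero_le_one)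
  have h : -Ud j v ≤ Glo Ud j := le_ciSup (f := fun w => -Ud j w) (Set.finite_range _).bddAbove v
  rw [div_le_one (hs j v)]
  linarith [hG j]

theorem piG_le_piG_of_le (hs : ∀ i v, 0 < Uu i v + Ud i v) {G G' : Fin m → ℝ} (h : G ≤ G')
    (v : V) : piG Uu Ud G' v ≤ piG Uu Ud G v :=
  max_le_max le_rfl <| ciSup_mono (Set.finite_range _).bddAbove fun j =>
    div_le_div_of_nonneg_right (by linarith [h j]) (hs j v).le

theorem piG_update_eq (hs : ∀ i v, 0 < Uu i v + Ud i v) {G : Fin m → ℝ} {i : Fin m} {t : ℝ}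
    (ht : t ≤ G i) (hbest : ∀ v, Uu i v - piG Uu Ud G v * (Uu i v + Ud i v) ≤ t) :
    piG Uu Ud (Function.update G i t) = piG Uu Ud G := by
  funext v
  refine le_antisymm (max_le (le_max_left _ _) (Real.iSup_le (fun j => ?_) ?_))
    (piG_le_piG_of_le hs (update_le_self_iff.2 ht) v)
  · rcases eq_or_ne j i with rfl | hj
    · rw [Function.update_self, div_le_iff₀ (hs j v)]
      linarith [hbest v]
    · rw [Function.update_of_ne hj]
      exact div_le_piG G j v
  · exact le_max_left _ _

theorem Gpi_piG_le [Nonempty V] (hs : ∀ i v, 0 < Uu i v + Ud i v) (G : Fin m → ℝ) (i : Fin m) :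
    Gpi Uu Ud (piG Uu Ud G) i ≤ G i :=
  ciSup_le fun v => sub_mul_piG_le hs G i v

theorem le_Gpi (π : V → ℝ) (i : Fin m) (v : V) :
    Uu i v - π v * (Uu i v + Ud i v) ≤ Gpi Uu Ud π i :=
  le_ciSup (f := fun v => Uu i v - π v * (Uu i v + Ud i v)) (Set.finite_range _).bddAbove v

theorem Glo_le_Gpi [Nonempty V] (hs : ∀ i v, 0 < Uu i v + Ud i v) {π : V → ℝ}
    (hπ : ∀ v, π v ≤ 1) (i : Fin m) : Glo Ud i ≤ Gpi Uu Ud π i :=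
  ciSup_le fun v => by nlinarith [le_Gpi (Uu := Uu) (Ud := Ud) π i v, hπ v, hs i v]

theorem UDfun_update_of_piG_eq (cfa P0 : V → ℝ) (pa : ℝ) (p G : Fin m → ℝ) (i : Fin m) (t : ℝ)
    (h : piG Uu Ud (Function.update G i t) = piG Uu Ud G) :
    UDfun Uu Ud cfa P0 pa p (Function.update G i t) =
      UDfun Uu Ud cfa P0 pa p G + pa * p i * (G i - t) := by
  have hterm : ∀ j, p j * Function.update G i t j =
      p j * G j + (Pi.single i (p i * (t - G i)) : Fin m → ℝ) j := by
    intro j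
    rcases eq_or_ne j i with rfl | hj
    · simp only [Function.update_self, Pi.single_eq_same]; ring
    · simp [hj]
  simp only [UDfun, h, hterm, Finset.sum_add_distrib, Finset.sum_pi_single', Finset.mem_univ,
    if_true]
  ring

end

theorem best_response_attains_Gmax_general {V : Type*} [Fintype V] [Nonempty V] {m : ℕ}
    (Uu Ud : Fin m → V → ℝ) (hs : ∀ i v, 0 < Uu i v + Ud i v)
    (cfa : V → ℝ)
    (P0 : V → ℝ)
    (pa : ℝ) (hpa0 : 0 < pa)
    (p : Fin m → ℝ) (hp0 : ∀ i, 0 < p i)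
    (Gmax : Fin m → ℝ) (hGmax : ∀ i, Gmax i ∈ Set.Icc (Glo Ud i) (Ghi Uu i))
    (hmax : ∀ G : Fin m → ℝ, (∀ i, G i ∈ Set.Icc (Glo Ud i) (Ghi Uu i)) →
      UDfun Uu Ud cfa P0 pa p G ≤ UDfun Uu Ud cfa P0 pa p Gmax) :
    ∀ i, Gpi Uu Ud (piG Uu Ud Gmax) i = Gmax i := by
  intro i
  refine le_antisymm (Gpi_piG_le hs Gmax i) (not_lt.1 fun hlt => ?_)
  set t := Gpi Uu Ud (piG Uu Ud Gmax) i
  have hbox : ∀ j, Function.update Gmax i t j ∈ Set.Icc (Glo Ud j) (Ghi Uu j) := by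
    intro j
    rcases eq_or_ne j i with rfl | hj
    · rw [Function.update_self]
      exact ⟨Glo_le_Gpi hs (piG_le_one hs fun k => (hGmax k).1) j, hlt.le.trans (hGmax j).2⟩
    · rw [Function.update_of_ne hj]
      exact hGmax j
  have hπ := piG_update_eq hs hlt.le (le_Gpi _ i)
  have hgain := hmax _ hbox
  rw [UDfun_update_of_piG_eq cfa P0 pa p Gmax i t hπ] at hgain
  linarith [mul_pos (mul_pos hpa0 (hp0 i)) (sub_pos.2 hlt)]

/-- if `G_max` maximizes `U^D` over the box, then each attacker type's
best-response payoff against `π_{G_max}` is exactly `(G_max)ᵢ`. -/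
theorem best_response_attains_Gmax {V : Type*} [Fintype V] [Nonempty V] {m : ℕ}
    (Uu Ud : Fin m → V → ℝ) (hs : ∀ i v, 0 < Uu i v + Ud i v)
    (cfa : V → ℝ) (hcfa : ∀ v, 0 ≤ cfa v)
    (P0 : V → ℝ) (hP00 : ∀ v, 0 ≤ P0 v) (hP01 : ∑ v, P0 v = 1)
    (pa : ℝ) (hpa0 : 0 < pa) (hpa1 : pa < 1)
    (p : Fin m → ℝ) (hp0 : ∀ i, 0 < p i) (hp1 : ∑ i, p i = 1)
    (Gmax : Fin m → ℝ) (hGmax : ∀ i, Gmax i ∈ Set.Icc (Glo Ud i) (Ghi Uu i))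
    (hmax : ∀ G : Fin m → ℝ, (∀ i, G i ∈ Set.Icc (Glo Ud i) (Ghi Uu i)) →
      UDfun Uu Ud cfa P0 pa p G ≤ UDfun Uu Ud cfa P0 pa p Gmax) :
    ∀ i, Gpi Uu Ud (piG Uu Ud Gmax) i = Gmax i :=
  best_response_attains_Gmax_general Uu Ud hs cfa P0 pa hpa0 p hp0 Gmax hGmax hmax
end
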